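/- arXiv:1508.02592 — 2 statements merged into one kernel-verified Lean document; each statement's English description precedes it below -/
import Mathlib

section
/- Let φ̃ : ℝ × [0,π] × S² → ℝ be continuous, and suppose there are constants C⁺ and C⁻ such that φ̃(π, 0, ω) = C⁺ and φ̃(−π, 0, ω) = C⁻ for all ω ∈ S² (continuity at the future and past timelike infinity points i⁺ and i⁻ of the Einstein cylinder). Define φ(t,r,ω) = Ω(t,r) φ̃(τ(t,r), ζ(t,r), ω) on ℝ × (0,∞) × S². Then for every fixed r > 0 and ω ∈ S²: lim_{t→+∞} t² φ(t, r, ω) = 2C⁺ and lim_{t→−∞} t² φ(t, r, ω) = 2C⁻. In particular φ decays like 1/t² along the integral lines of ∂_t. -/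
/-! As `t → ±∞` with `r` fixed, `(τ, ζ) → (±π, 0)` inside the domain `ζ ∈ [0, π]` of `φ̃`, so
`φ̃(τ, ζ, ω) → C^±` by continuity. Independently, with `s = 1/t`,
`t² Ω(t, r) = 2 / √((s² + (1 - r s)²) (s² + (1 + r s)²))`, which tends to `2` as `s → 0`. -/

open Real Filter

/-- Compactified time coordinate `τ(t,r) = arctan(t−r) + arctan(t+r)`. -/
noncomputable def tauC (t r : ℝ) : ℝ := arctan (t - r) + arctan (t + r)

/-- Compactified space coordinate `ζ(t,r) = arctan(t+r) − arctan(t−r)`. -/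
noncomputable def zetaC (t r : ℝ) : ℝ := arctan (t + r) - arctan (t - r)

/-- Conformal factor `Ω(t,r) = 2/√((1+(t−r)²)(1+(t+r)²))`. -/
noncomputable def OmegaC (t r : ℝ) : ℝ :=
  2 / Real.sqrt ((1 + (t - r) ^ 2) * (1 + (t + r) ^ 2))

/-- The unit 2-sphere. -/
abbrev S2 : Type := Metric.sphere (0 : EuclideanSpace ℝ (Fin 3)) 1

open Bornology Topology

lemma zetaC_mem_Icc (t : ℝ) {r : ℝ} (hr : 0 ≤ r) : zetaC t r ∈ Set.Icc 0 π := by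
  have hmono : arctan (t - r) ≤ arctan (t + r) := arctan_strictMono.monotone (by linarith)
  have := arctan_lt_pi_div_two (t + r)
  have := neg_pi_div_two_lt_arctan (t - r)
  constructor <;> simp only [zetaC] <;> linarith

lemma tendsto_arctan_add_const_atTop (c : ℝ) :
    Tendsto (fun t => arctan (t + c)) atTop (𝓝 (π / 2)) :=
  (tendsto_arctan_atTop.mono_right nhdsWithin_le_nhds).comp
    (tendsto_atTop_add_const_right _ c tendsto_id)

lemma tendsto_arctan_add_const_atBot (c : ℝ) :
    Tendsto (fun t => arctan (t + c)) atBot (𝓝 (-(π / 2))) :=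
  (tendsto_arctan_atBot.mono_right nhdsWithin_le_nhds).comp
    (tendsto_atBot_add_const_right _ c tendsto_id)

lemma tendsto_tauC_atTop (r : ℝ) : Tendsto (tauC · r) atTop (𝓝 π) := by
  have := (tendsto_arctan_add_const_atTop (-r)).add (tendsto_arctan_add_const_atTop r)
  simpa only [tauC, ← sub_eq_add_neg, add_halves] using this

lemma tendsto_tauC_atBot (r : ℝ) : Tendsto (tauC · r) atBot (𝓝 (-π)) := by
  have := (tendsto_arctan_add_const_atBot (-r)).add (tendsto_arctan_add_const_atBot r)
  rw [← neg_add, add_halves] at this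
  simpa only [tauC, ← sub_eq_add_neg] using this

lemma tendsto_zetaC_atTop (r : ℝ) : Tendsto (zetaC · r) atTop (𝓝 0) := by
  have := (tendsto_arctan_add_const_atTop r).sub (tendsto_arctan_add_const_atTop (-r))
  simpa only [zetaC, ← sub_eq_add_neg, sub_self] using this

lemma tendsto_zetaC_atBot (r : ℝ) : Tendsto (zetaC · r) atBot (𝓝 0) := by
  have := (tendsto_arctan_add_const_atBot r).sub (tendsto_arctan_add_const_atBot (-r))
  simpa only [zetaC, ← sub_eq_add_neg, sub_self] using this

lemma sq_mul_OmegaC {t : ℝ} (ht : t ≠ 0) (r : ℝ) :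
    t ^ 2 * OmegaC t r =
      2 / √((t⁻¹ ^ 2 + (1 - r * t⁻¹) ^ 2) * (t⁻¹ ^ 2 + (1 + r * t⁻¹) ^ 2)) := by
  have hP : (1 + (t - r) ^ 2) * (1 + (t + r) ^ 2) =
      (t ^ 2) ^ 2 * ((t⁻¹ ^ 2 + (1 - r * t⁻¹) ^ 2) * (t⁻¹ ^ 2 + (1 + r * t⁻¹) ^ 2)) := by
    field_simp
  rw [OmegaC, hP, sqrt_mul (by positivity), sqrt_sq (by positivity)]
  field_simp

lemma tendsto_sq_mul_OmegaC_cobounded (r : ℝ) :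
    Tendsto (fun t => t ^ 2 * OmegaC t r) (cobounded ℝ) (𝓝 2) := by
  set F : ℝ → ℝ := fun s => 2 / √((s ^ 2 + (1 - r * s) ^ 2) * (s ^ 2 + (1 + r * s) ^ 2))
  have hF : ContinuousAt F 0 :=
    continuousAt_const.div (by fun_prop) (by norm_num)
  have hF0 : F 0 = 2 := by norm_num [F]
  refine (hF0 ▸ hF.tendsto.comp tendsto_inv₀_cobounded).congr' ?_
  filter_upwards [eventually_ne_cobounded 0] with t ht
  exact (sq_mul_OmegaC ht r).symm

lemma tendsto_sq_mul_OmegaC_mul_of_tendsto {X : Type*} [TopologicalSpace X]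
    {φt : ℝ → ℝ → X → ℝ}
    (hcont : ContinuousOn (fun p : ℝ × ℝ × X => φt p.1 p.2.1 p.2.2)
      (Set.univ ×ˢ Set.Icc 0 π ×ˢ Set.univ))
    {l : Filter ℝ} (hl : l ≤ cobounded ℝ) {r a : ℝ} (hr : 0 ≤ r) (ω : X)
    (hτ : Tendsto (tauC · r) l (𝓝 a)) (hζ : Tendsto (zetaC · r) l (𝓝 0)) :
    Tendsto (fun t => t ^ 2 * (OmegaC t r * φt (tauC t r) (zetaC t r) ω)) l
      (𝓝 (2 * φt a 0 ω)) := by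
  have hmap : Tendsto (fun t => (tauC t r, zetaC t r, ω)) l
      (𝓝[Set.univ ×ˢ Set.Icc 0 π ×ˢ Set.univ] (a, 0, ω)) :=
    tendsto_nhdsWithin_iff.2 ⟨hτ.prodMk_nhds (hζ.prodMk_nhds tendsto_const_nhds),
      .of_forall fun t => ⟨trivial, zetaC_mem_Icc t hr, trivial⟩⟩
  have hφt := (hcont _ ⟨trivial, ⟨le_rfl, pi_pos.le⟩, trivial⟩).tendsto.comp hmap
  exact (((tendsto_sq_mul_OmegaC_cobounded r).mono_left hl).mul hφt).congr fun t => mul_assoc _ _ _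

theorem stmt_4 (φt : ℝ → ℝ → S2 → ℝ)
    (hcont : ContinuousOn (fun p : ℝ × ℝ × S2 => φt p.1 p.2.1 p.2.2)
      (Set.univ ×ˢ Set.Icc 0 π ×ˢ Set.univ))
    (Cplus Cminus : ℝ)
    (hplus : ∀ ω : S2, φt π 0 ω = Cplus)
    (hminus : ∀ ω : S2, φt (-π) 0 ω = Cminus)
    (φ : ℝ → ℝ → S2 → ℝ)
    (hφ : ∀ t r ω, 0 < r → φ t r ω = OmegaC t r * φt (tauC t r) (zetaC t r) ω) :
    ∀ (r : ℝ), 0 < r → ∀ ω : S2,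
      Tendsto (fun t => t ^ 2 * φ t r ω) atTop (nhds (2 * Cplus)) ∧
      Tendsto (fun t => t ^ 2 * φ t r ω) atBot (nhds (2 * Cminus)) := by
  intro r hr ω
  have hφr : (fun t => t ^ 2 * φ t r ω) =
      fun t => t ^ 2 * (OmegaC t r * φt (tauC t r) (zetaC t r) ω) :=
    funext fun t => by rw [hφ t r ω hr]
  rw [hφr]
  constructor
  · simpa only [hplus ω] using tendsto_sq_mul_OmegaC_mul_of_tendsto hcont
      IsOrderBornology.atTop_le_cobounded hr.le ω (tendsto_tauC_atTop r) (tendsto_zetaC_atTop r)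
  · simpa only [hminus ω] using tendsto_sq_mul_OmegaC_mul_of_tendsto hcont
      IsOrderBornology.atBot_le_cobounded hr.le ω (tendsto_tauC_atBot r) (tendsto_zetaC_atBot r)
end

section
/- Let φ̃ : ℝ × [0,π] × S² → ℝ be of class C¹, and suppose there are constants C₀ and C₁ such that φ̃(0, π, ω) = C₀ and (∂_τ φ̃)(0, π, ω) = C₁ for all ω ∈ S² (continuity of φ̃ and ∂_τ φ̃ at the spacelike infinity point i⁰, which corresponds to (τ,ζ) = (0,π)). Define φ(t,r,ω) = Ω(t,r) φ̃(τ(t,r), ζ(t,r), ω) on ℝ × (0,∞) × S². Then for every ω ∈ S²: lim_{r→+∞} r² φ(0, r, ω) = 2C₀ and lim_{r→+∞} r⁴ (∂_t φ)(0, r, ω) = 4C₁. -/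
open Real Filter

/-!
At `t = 0` one has `τ = 0`, `ζ = 2 arctan r → π` and `Ω = 2 / (1 + r²)`, so `r² φ(0, r, ω)` is
`r² Ω(0, r) → 2` times `φ̃(0, 2 arctan r, ω) → C₀`. Differentiating in `t` at `t = 0`, time
symmetry kills `∂ₜΩ` and `∂ₜζ`, while `∂ₜτ = 2 / (1 + r²) = Ω(0, r)`; hence
`∂ₜφ(0, r, ω) = Ω(0, r)² ∂_τφ̃(0, 2 arctan r, ω)`, and `r⁴ ∂ₜφ → 2² C₁` because `∂_τφ̃` is
continuous up to the boundary point `(0, π)` of the strip.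
-/

open Set Topology

lemma tauC_zero_left (r : ℝ) : tauC 0 r = 0 := by
  simp [tauC, arctan_neg]

lemma zetaC_zero_left (r : ℝ) : zetaC 0 r = 2 * arctan r := by
  rw [zetaC, zero_add, zero_sub, arctan_neg]
  ring

lemma OmegaC_zero_left (r : ℝ) : OmegaC 0 r = 2 / (1 + r ^ 2) := by
  have h : (1 + (0 - r) ^ 2) * (1 + (0 + r) ^ 2) = (1 + r ^ 2) ^ 2 := by ring
  rw [OmegaC, h, sqrt_sq (by positivity)]

lemma hasDerivAt_tauC_zero (r : ℝ) : HasDerivAt (fun t => tauC t r) (OmegaC 0 r) 0 := by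
  refine (((hasDerivAt_id 0).sub_const r).arctan.add
    ((hasDerivAt_id 0).add_const r).arctan).congr_deriv ?_
  rw [OmegaC_zero_left]
  simp only [id, zero_sub, zero_add, neg_sq]
  ring

lemma hasDerivAt_zetaC_zero (r : ℝ) : HasDerivAt (fun t => zetaC t r) 0 0 := by
  refine (((hasDerivAt_id 0).add_const r).arctan.sub
    ((hasDerivAt_id 0).sub_const r).arctan).congr_deriv ?_
  simp only [id, zero_sub, zero_add, neg_sq, sub_self]

lemma hasDerivAt_OmegaC_zero (r : ℝ) : HasDerivAt (fun t => OmegaC t r) 0 0 := by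
  have hu : HasDerivAt (fun t : ℝ => (1 + (t - r) ^ 2) * (1 + (t + r) ^ 2)) 0 0 :=
    (((((hasDerivAt_id 0).sub_const r).pow 2).const_add 1).mul
      ((((hasDerivAt_id 0).add_const r).pow 2).const_add 1)).congr_deriv (by simp only [Pi.pow_apply, id]; ring)
  have hu0 : (0 : ℝ) < (1 + (0 - r) ^ 2) * (1 + (0 + r) ^ 2) := by positivity
  exact ((hasDerivAt_const (0 : ℝ) (2 : ℝ)).div (hu.sqrt hu0.ne')
    (sqrt_pos.2 hu0).ne').congr_deriv (by simp)

lemma hasDerivAt_OmegaC_mul_comp_zero {F : ℝ × ℝ → ℝ} {r : ℝ}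
    (hF : DifferentiableAt ℝ F (0, 2 * arctan r)) :
    HasDerivAt (fun t => OmegaC t r * F (tauC t r, zetaC t r))
      (OmegaC 0 r ^ 2 * fderiv ℝ F (0, 2 * arctan r) (1, 0)) 0 := by
  have hF' : DifferentiableAt ℝ F (tauC 0 r, zetaC 0 r) := by
    rwa [tauC_zero_left, zetaC_zero_left]
  have hcoords := (hasDerivAt_tauC_zero r).prodMk (hasDerivAt_zetaC_zero r)
  refine ((hasDerivAt_OmegaC_zero r).mul
    (hF'.hasFDerivAt.comp_hasDerivAt 0 hcoords)).congr_deriv ?_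
  have hv : ((OmegaC 0 r, 0) : ℝ × ℝ) = OmegaC 0 r • ((1, 0) : ℝ × ℝ) := by simp
  rw [tauC_zero_left, zetaC_zero_left, hv, map_smul, smul_eq_mul]
  ring

lemma tendsto_sq_mul_OmegaC_zero_left :
    Tendsto (fun r => r ^ 2 * OmegaC 0 r) atTop (𝓝 2) := by
  have h : Tendsto (fun r : ℝ => 2 - 2 / (1 + r ^ 2)) atTop (𝓝 (2 - 0)) :=
    tendsto_const_nhds.sub <| tendsto_const_nhds.div_atTop <|
      tendsto_atTop_add_const_left _ _ (tendsto_pow_atTop two_ne_zero)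
  rw [sub_zero] at h
  refine h.congr fun r => ?_
  have : (1 : ℝ) + r ^ 2 ≠ 0 := by positivity
  rw [OmegaC_zero_left]
  field_simp
  ring

lemma two_mul_arctan_mem_Ioo {r : ℝ} (hr : 0 < r) : 2 * arctan r ∈ Ioo 0 π :=
  ⟨by linarith [arctan_pos.2 hr], by linarith [arctan_lt_pi_div_two r]⟩

lemma univ_prod_Icc_mem_nhds {x ζ : ℝ} (hζ : ζ ∈ Ioo 0 π) :
    univ ×ˢ Icc 0 π ∈ 𝓝 (x, ζ) :=
  prod_mem_nhds univ_mem (Icc_mem_nhds hζ.1 hζ.2)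

lemma tendsto_two_mul_arctan_nhdsWithin (x : ℝ) :
    Tendsto (fun r => (x, 2 * arctan r)) atTop (𝓝[univ ×ˢ Icc 0 π] (x, π)) := by
  refine tendsto_nhdsWithin_iff.2 ⟨tendsto_const_nhds.prodMk_nhds ?_, ?_⟩
  · simpa [mul_div_cancel₀] using
      (tendsto_arctan_atTop.mono_right nhdsWithin_le_nhds).const_mul (2 : ℝ)
  · filter_upwards [eventually_gt_atTop 0] with r hr
    exact ⟨trivial, Ioo_subset_Icc_self (two_mul_arctan_mem_Ioo hr)⟩

lemma fderivWithin_apply_one_zero {E G : Type*} [NormedAddCommGroup E] [NormedSpace ℝ E]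
    [NormedAddCommGroup G] [NormedSpace ℝ G] {F : ℝ × E → G} {s : Set (ℝ × E)} {a : ℝ} {b : E}
    (hF : DifferentiableWithinAt ℝ F s (a, b)) (hs : ∀ τ, (τ, b) ∈ s) :
    fderivWithin ℝ F s (a, b) (1, 0) = deriv (fun τ => F (τ, b)) a := by
  have hline : HasDerivAt (fun τ : ℝ => (τ, b)) ((1 : ℝ), (0 : E)) a :=
    (hasDerivAt_id a).prodMk (hasDerivAt_const a b)
  have := hF.hasFDerivWithinAt.comp_hasDerivWithinAt a (hline.hasDerivWithinAt (s := univ))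
    fun τ _ => hs τ
  rw [hasDerivWithinAt_univ] at this
  exact this.deriv.symm

theorem stmt_5 (φt : ℝ → ℝ → S2 → ℝ)
    (hC1 : ∀ ω : S2, ContDiffOn ℝ 1 (fun p : ℝ × ℝ => φt p.1 p.2 ω)
      (Set.univ ×ˢ Set.Icc 0 π))
    (C0 C1 : ℝ)
    (h0 : ∀ ω : S2, φt 0 π ω = C0)
    (h1 : ∀ ω : S2, deriv (fun τ => φt τ π ω) 0 = C1)
    (φ : ℝ → ℝ → S2 → ℝ)
    (hφ : ∀ t r ω, 0 < r → φ t r ω = OmegaC t r * φt (tauC t r) (zetaC t r) ω) :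
    ∀ ω : S2,
      Tendsto (fun r => r ^ 2 * φ 0 r ω) atTop (nhds (2 * C0)) ∧
      Tendsto (fun r => r ^ 4 * deriv (fun t => φ t r ω) 0) atTop (nhds (4 * C1)) := by
  intro ω
  set s : Set (ℝ × ℝ) := univ ×ˢ Icc 0 π
  set F : ℝ × ℝ → ℝ := fun p => φt p.1 p.2 ω
  have hF : ContDiffOn ℝ 1 F s := hC1 ω
  have hline : ∀ τ : ℝ, (τ, π) ∈ s := fun _ => ⟨trivial, right_mem_Icc.2 pi_pos.le⟩
  have hpath := tendsto_two_mul_arctan_nhdsWithin 0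
  have hF_lim : Tendsto (fun r => F (0, 2 * arctan r)) atTop (𝓝 C0) := by
    rw [← h0 ω]
    exact (hF.continuousOn _ (hline 0)).tendsto.comp hpath
  have hdF_lim : Tendsto (fun r => fderivWithin ℝ F s (0, 2 * arctan r) (1, 0)) atTop (𝓝 C1) := by
    rw [← h1 ω, ← fderivWithin_apply_one_zero ((hF.differentiableOn one_ne_zero) _ (hline 0))
      hline]
    exact (((hF.continuousOn_fderivWithin (uniqueDiffOn_univ.prod (uniqueDiffOn_Icc pi_pos))
      le_rfl) _ (hline 0)).clm_apply continuousWithinAt_const).tendsto.comp hpath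
  constructor
  · refine (tendsto_sq_mul_OmegaC_zero_left.mul hF_lim).congr' ?_
    filter_upwards [eventually_gt_atTop 0] with r hr
    rw [hφ 0 r ω hr, tauC_zero_left, zetaC_zero_left, mul_assoc]
  · have h4 : (4 : ℝ) * C1 = 2 ^ 2 * C1 := by norm_num
    rw [h4]
    refine ((tendsto_sq_mul_OmegaC_zero_left.pow 2).mul hdF_lim).congr' ?_
    filter_upwards [eventually_gt_atTop 0] with r hr
    have hs : s ∈ 𝓝 (0, 2 * arctan r) := univ_prod_Icc_mem_nhds (two_mul_arctan_mem_Ioo hr)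
    have hφ_eq : (fun t => φ t r ω) = fun t => OmegaC t r * F (tauC t r, zetaC t r) :=
      funext fun t => hφ t r ω hr
    rw [hφ_eq, (hasDerivAt_OmegaC_mul_comp_zero
      ((hF.contDiffAt hs).differentiableAt one_ne_zero)).deriv, fderivWithin_of_mem_nhds hs]
    ring
end
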